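/- Let B ∈ ℝ^{n₁×n₂} and let A = [[0, B],[Bᵀ, 0]] ∈ ℝ^{(n₁+n₂)×(n₁+n₂)} be the associated Jordan–Wielandt matrix. For z ∈ {−1, +1}^{n₂} let z̃ = [0; z] ∈ ℝ^{n₁+n₂} (the lower partial Rademacher vector). Then 2 · (1/2^{n₂}) Σ_{z ∈ {−1,+1}^{n₂}} z̃ᵀ exp(A) z̃ + (n₁ − n₂) = tr(exp(A)). Similarly, for upper partial Rademacher vectors z̃ = [z; 0] with z ∈ {−1,+1}^{n₁}: 2 · (1/2^{n₁}) Σ_{z} z̃ᵀ exp(A) z̃ + (n₂ − n₁) = tr(exp(A)). Hence the corresponding stochastic trace estimators tr(exp(A))† = (2/N) Σ_{i=1}^N z̃ᵢᵀ exp(A) z̃ᵢ ± (n₁ − n₂) are unbiased. -/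

import Mathlib

open Matrix

/-- The `±1` sign vector encoded by a Boolean vector. -/
def radVec {n : ℕ} (s : Fin n → Bool) : Fin n → ℝ :=
  fun i => if s i then 1 else -1

/-!
Averaging a quadratic form over all sign vectors kills its off-diagonal terms, so the average
over lower (upper) partial Rademacher vectors is the trace of the lower-right (upper-left) block
of `exp A`. These two block traces differ by `n₁ - n₂`: the grading `J = diag(1, -1)`
anticommutes with `A`, so cycling one factor `A` around the trace gives
`tr (J Aᵏ) = -tr (J Aᵏ) = 0` for `k ≥ 1`, and summing the exponential series leaves
`tr (J exp A) = tr J = n₁ - n₂`.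
-/

section Rademacher

variable {n : ℕ}

theorem radVec_mul_self (s : Fin n → Bool) (i : Fin n) : radVec s i * radVec s i = 1 := by
  unfold radVec; split <;> norm_num

theorem sum_radVec_mul_radVec_of_ne {i j : Fin n} (hij : i ≠ j) :
    ∑ s : Fin n → Bool, radVec s i * radVec s j = 0 := by
  -- flipping the `i`-th sign is a bijection that negates every summand
  let flip (s : Fin n → Bool) : Fin n → Bool := Function.update s i (!s i)
  have hflip_invol : Function.Involutive flip := fun s => by
    ext k; by_cases hk : k = i <;> simp [flip, hk]
  have hflip (s : Fin n → Bool) :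
      radVec (flip s) i * radVec (flip s) j = -(radVec s i * radVec s j) := by
    simp only [flip, radVec, Function.update_self, Function.update_of_ne hij.symm]
    cases s i <;> cases s j <;> norm_num
  have hS := Equiv.sum_comp (hflip_invol.toPerm flip) fun s => radVec s i * radVec s j
  simp only [Function.Involutive.coe_toPerm, hflip, Finset.sum_neg_distrib] at hS
  exact self_eq_neg.mp hS.symm

theorem sum_radVec_mul_radVec (i j : Fin n) :
    ∑ s : Fin n → Bool, radVec s i * radVec s j = if i = j then 2 ^ n else 0 := by
  split_ifs with hij
  · simp [hij, radVec_mul_self]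
  · exact sum_radVec_mul_radVec_of_ne hij

theorem sum_radVec_dotProduct_mulVec (M : Matrix (Fin n) (Fin n) ℝ) :
    ∑ s : Fin n → Bool, radVec s ⬝ᵥ M *ᵥ radVec s = 2 ^ n * M.trace := by
  calc ∑ s : Fin n → Bool, radVec s ⬝ᵥ M *ᵥ radVec s
      = ∑ i, ∑ j, (∑ s : Fin n → Bool, radVec s i * radVec s j) * M i j := by
        simp only [dotProduct, mulVec, Finset.mul_sum, Finset.sum_mul]
        rw [Finset.sum_comm]
        refine Finset.sum_congr rfl fun i _ => ?_
        rw [Finset.sum_comm]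
        exact Finset.sum_congr rfl fun j _ => Finset.sum_congr rfl fun s _ => by ring
    _ = 2 ^ n * M.trace := by
        simp [sum_radVec_mul_radVec, Matrix.trace, Finset.mul_sum]

end Rademacher

section Blocks

variable {m n R : Type*} [Fintype m] [Fintype n]

theorem sumElim_zero_left_dotProduct_mulVec [NonUnitalNonAssocSemiring R]
    (M : Matrix (m ⊕ n) (m ⊕ n) R) (v : n → R) :
    Sum.elim 0 v ⬝ᵥ M *ᵥ Sum.elim 0 v = v ⬝ᵥ M.toBlocks₂₂ *ᵥ v := by
  simp [dotProduct, mulVec, Matrix.toBlocks₂₂, Fintype.sum_sum_type]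

theorem sumElim_zero_right_dotProduct_mulVec [NonUnitalNonAssocSemiring R]
    (M : Matrix (m ⊕ n) (m ⊕ n) R) (v : m → R) :
    Sum.elim v 0 ⬝ᵥ M *ᵥ Sum.elim v 0 = v ⬝ᵥ M.toBlocks₁₁ *ᵥ v := by
  simp [dotProduct, mulVec, Matrix.toBlocks₁₁, Fintype.sum_sum_type]

theorem trace_eq_trace_toBlocks₁₁_add_trace_toBlocks₂₂ [AddCommMonoid R]
    (M : Matrix (m ⊕ n) (m ⊕ n) R) :
    M.trace = M.toBlocks₁₁.trace + M.toBlocks₂₂.trace := by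
  simp [Matrix.trace, Matrix.toBlocks₁₁, Matrix.toBlocks₂₂, Fintype.sum_sum_type]

variable [DecidableEq m] [DecidableEq n]

theorem trace_fromBlocks_one_neg_one_mul [Ring R] (M : Matrix (m ⊕ n) (m ⊕ n) R) :
    (fromBlocks 1 0 0 (-1) * M).trace = M.toBlocks₁₁.trace - M.toBlocks₂₂.trace := by
  rw [← M.fromBlocks_toBlocks, fromBlocks_multiply]
  simp [Matrix.trace, Fintype.sum_sum_type, sub_eq_add_neg]

theorem trace_fromBlocks_one_neg_one [Ring R] :
    (fromBlocks 1 0 0 (-1) : Matrix (m ⊕ n) (m ⊕ n) R).trace =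
      Fintype.card m - Fintype.card n := by
  simp [Matrix.trace, Fintype.sum_sum_type, sub_eq_add_neg]

theorem fromBlocks_one_neg_one_mul_fromBlocks_zero [Ring R] (B : Matrix m n R)
    (C : Matrix n m R) :
    fromBlocks 1 0 0 (-1) * fromBlocks 0 B C 0 =
      -(fromBlocks 0 B C 0 * fromBlocks 1 0 0 (-1)) := by
  simp [fromBlocks_multiply, fromBlocks_neg]

end Blocks

theorem trace_mul_pow_eq_zero_of_mul_eq_neg {n R : Type*} [Fintype n] [DecidableEq n]
    [CommRing R] [IsAddTorsionFree R] {J A : Matrix n n R} (hJA : J * A = -(A * J)) {k : ℕ}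
    (hk : k ≠ 0) :
    (J * A ^ k).trace = 0 := by
  obtain ⟨l, rfl⟩ := Nat.exists_eq_add_one_of_ne_zero hk
  refine self_eq_neg.mp ?_
  calc (J * A ^ (l + 1)).trace
      = (J * A * A ^ l).trace := by rw [pow_succ', Matrix.mul_assoc]
    _ = -(A * (J * A ^ l)).trace := by rw [hJA, Matrix.neg_mul, trace_neg, Matrix.mul_assoc]
    _ = -(J * A ^ (l + 1)).trace := by rw [trace_mul_comm, Matrix.mul_assoc, ← pow_succ]

theorem ContinuousLinearMap.map_exp_eq_map_one {𝕂 𝔸 E : Type*} [RCLike 𝕂] [NormedRing 𝔸]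
    [NormedAlgebra 𝕂 𝔸] [CompleteSpace 𝔸] [AddCommGroup E] [Module 𝕂 E] [TopologicalSpace E]
    [T2Space E] (φ : 𝔸 →L[𝕂] E) {a : 𝔸} (h : ∀ k ≠ 0, φ (a ^ k) = 0) :
    φ (NormedSpace.exp a) = φ 1 := by
  have hsum := φ.hasSum (NormedSpace.exp_series_hasSum_exp' (𝕂 := 𝕂) a)
  refine hsum.unique ?_
  convert hasSum_single (f := fun k => φ ((k.factorial⁻¹ : 𝕂) • a ^ k)) 0 fun k hk => ?_
  · simp
  · rw [map_smul, h k hk, smul_zero]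

open scoped Norms.Operator in
theorem trace_mul_exp_eq_trace_of_mul_eq_neg {n 𝕂 : Type*} [Fintype n] [DecidableEq n]
    [RCLike 𝕂] {J A : Matrix n n 𝕂} (hJA : J * A = -(A * J)) :
    (J * NormedSpace.exp A).trace = J.trace := by
  let φ : Matrix n n 𝕂 →L[𝕂] 𝕂 :=
    ⟨traceLinearMap n 𝕂 𝕂 ∘ₗ LinearMap.mulLeft 𝕂 J, LinearMap.continuous_of_finiteDimensional _⟩
  have h := φ.map_exp_eq_map_one fun k hk => trace_mul_pow_eq_zero_of_mul_eq_neg hJA hk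
  conv_rhs => rw [← mul_one J]
  exact h

theorem trace_toBlocks₁₁_exp_sub_trace_toBlocks₂₂ {m n 𝕂 : Type*} [Fintype m] [Fintype n]
    [DecidableEq m] [DecidableEq n] [RCLike 𝕂] (B : Matrix m n 𝕂) (C : Matrix n m 𝕂) :
    (NormedSpace.exp (fromBlocks 0 B C 0)).toBlocks₁₁.trace -
        (NormedSpace.exp (fromBlocks 0 B C 0)).toBlocks₂₂.trace =
      Fintype.card m - Fintype.card n := by
  rw [← trace_fromBlocks_one_neg_one_mul, ← trace_fromBlocks_one_neg_one,
    trace_mul_exp_eq_trace_of_mul_eq_neg (fromBlocks_one_neg_one_mul_fromBlocks_zero B C)]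

/-- unbiasedness, rectangular case: for the Jordan–Wielandt matrix
`A = [[0,B],[Bᵀ,0]]` with `B ∈ ℝ^{n₁×n₂}`, the averages of the doubled quadratic
forms over lower partial Rademacher vectors `[0; z]` (resp. upper `[z; 0]`)
corrected by `n₁ - n₂` (resp. `n₂ - n₁`) equal `tr(exp A)`; hence the estimators
`(2/N) Σ z̃ᵢᵀ exp(A) z̃ᵢ ± (n₁ - n₂)` are unbiased. -/
theorem partial_rademacher_unbiased_rectangular
    {n₁ n₂ : ℕ} (B : Matrix (Fin n₁) (Fin n₂) ℝ)
    (A : Matrix (Fin n₁ ⊕ Fin n₂) (Fin n₁ ⊕ Fin n₂) ℝ)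
    (hA : A = Matrix.fromBlocks 0 B Bᵀ 0) :
    2 * ((1 / 2 ^ n₂) * ∑ s : Fin n₂ → Bool,
        Sum.elim 0 (radVec s) ⬝ᵥ (NormedSpace.exp A).mulVec (Sum.elim 0 (radVec s)))
        + ((n₁ : ℝ) - (n₂ : ℝ))
      = (NormedSpace.exp A).trace ∧
    2 * ((1 / 2 ^ n₁) * ∑ s : Fin n₁ → Bool,
        Sum.elim (radVec s) 0 ⬝ᵥ (NormedSpace.exp A).mulVec (Sum.elim (radVec s) 0))
        + ((n₂ : ℝ) - (n₁ : ℝ))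
      = (NormedSpace.exp A).trace := by
  have hdiff := trace_toBlocks₁₁_exp_sub_trace_toBlocks₂₂ B Bᵀ
  rw [← hA, Fintype.card_fin, Fintype.card_fin] at hdiff
  simp only [sumElim_zero_left_dotProduct_mulVec, sumElim_zero_right_dotProduct_mulVec,
    sum_radVec_dotProduct_mulVec,
    trace_eq_trace_toBlocks₁₁_add_trace_toBlocks₂₂ (NormedSpace.exp A)]
  constructor <;> field_simp <;> linarith
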